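/- Let S ⊆ ℝ^n be a linear subspace such that every v ∈ S satisfies ‖v‖_∞ ≤ √(ζ/n)·‖v‖₂, and let P : ℝ^n → ℝ^n be the orthogonal projection onto S. If r ∈ ℝ^n has at most s nonzero entries, then ‖P r‖_∞ ≤ √(ζ·s/n)·‖r‖₂. -/

import Mathlib

/-! The `i`-th coordinate of `P r` is `⟪P eᵢ, r⟫`. Since `P eᵢ ∈ S` has norm at most `1`, diffusion
bounds each of its entries by `√(ζ / n)`, so the coordinate is at most `√(ζ / n) · ‖r‖₁`; for an
`s`-sparse `r`, Cauchy–Schwarz on the support gives `‖r‖₁ ≤ √s · ‖r‖₂`. -/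

open Finset

namespace EuclideanSpace

variable {ι : Type*} [Fintype ι]

theorem starProjection_apply_eq_inner {𝕜 : Type*} [RCLike 𝕜] [DecidableEq ι]
    (K : Submodule 𝕜 (EuclideanSpace 𝕜 ι)) [K.HasOrthogonalProjection]
    (r : EuclideanSpace 𝕜 ι) (i : ι) :
    K.starProjection r i = inner 𝕜 (K.starProjection (single i 1)) r := by
  rw [K.inner_starProjection_left_eq_right, inner_single_left, map_one, one_mul]

theorem abs_inner_le_mul_sum_abs {u : EuclideanSpace ℝ ι} {c : ℝ} (hu : ∀ j, |u j| ≤ c)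
    (r : EuclideanSpace ℝ ι) : |inner ℝ u r| ≤ c * ∑ j, |r j| := by
  rw [PiLp.inner_apply, mul_sum]
  refine (abs_sum_le_sum_abs _ _).trans (sum_le_sum fun j _ => ?_)
  rw [real_inner_eq_re_inner, RCLike.re_to_real, RCLike.inner_apply, conj_trivial, abs_mul, mul_comm]
  exact mul_le_mul_of_nonneg_right (hu j) (abs_nonneg _)

theorem sum_abs_le_sqrt_mul_norm (r : EuclideanSpace ℝ ι) {s : ℕ}
    (hs : #{j | r j ≠ 0} ≤ s) : ∑ j, |r j| ≤ √s * ‖r‖ := by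
  set T : Finset ι := {j | r j ≠ 0}
  have hsupp : ∑ j ∈ T, |r j| = ∑ j, |r j| :=
    sum_filter_of_ne fun j _ h => abs_ne_zero.mp h
  have hsq : (∑ j ∈ T, |r j|) ^ 2 ≤ s * ‖r‖ ^ 2 := calc
    _ ≤ #T * ∑ j ∈ T, |r j| ^ 2 := sq_sum_le_card_mul_sum_sq
    _ ≤ s * ∑ j, |r j| ^ 2 := by gcongr; exact subset_univ T
    _ = s * ‖r‖ ^ 2 := by simp [real_norm_sq_eq, sq_abs]
  calc ∑ j, |r j| ≤ √(s * ‖r‖ ^ 2) := hsupp ▸ Real.le_sqrt_of_sq_le hsq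
    _ = √s * ‖r‖ := by rw [Real.sqrt_mul (Nat.cast_nonneg s), Real.sqrt_sq (norm_nonneg r)]

end EuclideanSpace

open EuclideanSpace in
theorem stmt_3_general {n : ℕ} (S : Submodule ℝ (EuclideanSpace ℝ (Fin n))) (ζ : ℝ)
    (hdiff : ∀ v ∈ S, ∀ i, |v i| ≤ Real.sqrt (ζ / n) * ‖v‖)
    (r : EuclideanSpace ℝ (Fin n)) (s : ℕ)
    (hsparse : (Finset.univ.filter fun i => r i ≠ 0).card ≤ s) :
    ∀ i, |(S.orthogonalProjectionOnto r : EuclideanSpace ℝ (Fin n)) i|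
      ≤ Real.sqrt (ζ * s / n) * ‖r‖ := by
  intro i
  set u := S.starProjection (single i 1)
  have hu : ∀ j, |u j| ≤ √(ζ / n) := fun j => calc
    |u j| ≤ √(ζ / n) * ‖u‖ := hdiff u (S.starProjection_apply_mem _) j
    _ ≤ √(ζ / n) * ‖single i (1 : ℝ)‖ := by gcongr; exact S.norm_starProjection_apply_le _
    _ = √(ζ / n) := by simp
  rw [Submodule.coe_orthogonalProjectionOnto_apply, starProjection_apply_eq_inner]
  calc |inner ℝ u r| ≤ √(ζ / n) * ∑ j, |r j| := abs_inner_le_mul_sum_abs hu r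
    _ ≤ √(ζ / n) * (√s * ‖r‖) := by gcongr; exact sum_abs_le_sqrt_mul_norm r hsparse
    _ = √(ζ * s / n) * ‖r‖ := by
      rw [← mul_assoc, ← Real.sqrt_mul' _ (Nat.cast_nonneg s), div_mul_eq_mul_div]

theorem stmt_3 {n : ℕ} (S : Submodule ℝ (EuclideanSpace ℝ (Fin n))) (ζ : ℝ) (hζ : 0 < ζ)
    (hdiff : ∀ v ∈ S, ∀ i, |v i| ≤ Real.sqrt (ζ / n) * ‖v‖)
    (r : EuclideanSpace ℝ (Fin n)) (s : ℕ)
    (hsparse : (Finset.univ.filter fun i => r i ≠ 0).card ≤ s) :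
    ∀ i, |(S.orthogonalProjectionOnto r : EuclideanSpace ℝ (Fin n)) i|
      ≤ Real.sqrt (ζ * s / n) * ‖r‖ :=
  stmt_3_general S ζ hdiff r s hsparse
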